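/- Let p_LL(β|ψ₁,ψ₂) be the marginal density of β when β|λ ~ N(0,λ²) and λ has the log-Laplace prior with scales ψ₁, ψ₂ > 0. Then for every ψ₁ > 0, p_LL(β|ψ₁,ψ₂) = O(|β|^{−1−1/ψ₂}) as |β| → ∞. -/

import Mathlib

open MeasureTheory Real Set Filter

/-- Marginal density of β for a N(0,λ²) kernel under the log-Laplace prior. -/
noncomputable def logLaplaceMarginal (ψ₁ ψ₂ β : ℝ) : ℝ :=
  ∫ l in Ioi (0 : ℝ),
    (2 * π * l ^ 2) ^ (-(1 : ℝ) / 2) * Real.exp (-β ^ 2 / (2 * l ^ 2)) *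
      (if l ≤ 1 then (1 / (2 * ψ₁)) * l ^ (-1 + 1 / ψ₁)
       else (1 / (2 * ψ₂)) * l ^ (-1 - 1 / ψ₂))

/-!
On `(0, 1]` the power `λ^(-1 + 1/ψ₁)` is at most `λ^(-1 - 1/ψ₂)`, so the whole prior is dominated
by a multiple of its tail `λ^(-1 - 1/ψ₂)`, and the Gaussian kernel is at most `λ⁻¹ e^(-β²/(2λ²))`.
Against this power the mixture integral is an inverse-gamma integral: the substitution `x ↦ x^(-2)`
turns `∫ x^(-1-q) e^(-b/x²) dx` into `Γ(q/2) b^(-q/2) / 2`, and `b = β²/2`, `q = 1 + 1/ψ₂` make this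
a constant times `|β|^(-1 - 1/ψ₂)`.
-/

-- Stated in the shape of `integral_comp_rpow_Ioi` with `p = -2`.
lemma rpow_neg_two_substitution {q b x : ℝ} (hx : 0 < x) :
    (|(-2 : ℝ)| * x ^ ((-2 : ℝ) - 1)) •
        ((x ^ (-2 : ℝ)) ^ (q / 2 - 1) * exp (-b * (x ^ (-2 : ℝ)) ^ (1 : ℝ))) =
      2 * (x ^ (-1 - q) * exp (-b / x ^ 2)) := by
  have hpow : (x ^ (-2 : ℝ)) ^ (q / 2 - 1) = x ^ (2 - q) := by
    rw [← rpow_mul hx.le]; ring_nf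
  have hsq : x ^ (-2 : ℝ) = (x ^ 2)⁻¹ := by
    rw [rpow_neg hx.le, rpow_two]
  rw [hpow, rpow_one, hsq, smul_eq_mul, abs_of_neg (by norm_num), neg_neg,
    mul_assoc, ← mul_assoc (x ^ _), ← rpow_add hx, div_eq_mul_inv (-b)]
  ring_nf

lemma integrableOn_rpow_mul_exp_neg_div_sq {q b : ℝ} (hq : 0 < q) (hb : 0 < b) :
    IntegrableOn (fun x => x ^ (-1 - q) * exp (-b / x ^ 2)) (Ioi 0) := by
  have hg : IntegrableOn (fun y : ℝ => y ^ (q / 2 - 1) * exp (-b * y ^ (1 : ℝ))) (Ioi 0) :=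
    integrableOn_rpow_mul_exp_neg_mul_rpow (by linarith) one_pos hb
  rw [← integrableOn_Ioi_comp_rpow_iff _ (by norm_num : (-2 : ℝ) ≠ 0)] at hg
  exact (integrable_const_mul_iff (two_ne_zero.isUnit) _).mp
    (hg.congr_fun (fun x hx => rpow_neg_two_substitution hx) measurableSet_Ioi)

lemma integral_rpow_mul_exp_neg_div_sq {q b : ℝ} (hq : 0 < q) (hb : 0 < b) :
    ∫ x in Ioi 0, x ^ (-1 - q) * exp (-b / x ^ 2) = b ^ (-q / 2) * Gamma (q / 2) / 2 := by
  have hg := integral_rpow_mul_exp_neg_mul_rpow one_pos (by linarith : -1 < q / 2 - 1) hb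
  rw [← integral_comp_rpow_Ioi _ (by norm_num : (-2 : ℝ) ≠ 0),
    setIntegral_congr_fun measurableSet_Ioi (fun x hx => rpow_neg_two_substitution hx),
    integral_const_mul] at hg
  rw [eq_div_iff two_ne_zero, mul_comm, hg]
  ring_nf

lemma rpow_two_pi_mul_sq_neg_half_le_inv {l : ℝ} (hl : 0 < l) :
    (2 * π * l ^ 2) ^ (-(1 : ℝ) / 2) ≤ l⁻¹ := by
  calc (2 * π * l ^ 2) ^ (-(1 : ℝ) / 2) ≤ (l ^ 2) ^ (-(1 : ℝ) / 2) :=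
        rpow_le_rpow_of_nonpos (by positivity) (by nlinarith [pi_gt_three, sq_nonneg l])
          (by norm_num)
    _ = l⁻¹ := by
        rw [← rpow_natCast, ← rpow_mul hl.le]; norm_num [rpow_neg_one]

lemma sq_div_two_rpow_neg_div_two (x q : ℝ) :
    (x ^ 2 / 2) ^ (-q / 2) = 2 ^ (q / 2) * |x| ^ (-q) := by
  rw [div_rpow (sq_nonneg x) zero_le_two, ← sq_abs, ← rpow_natCast, ← rpow_mul (abs_nonneg x),
    neg_div, rpow_neg zero_le_two, div_inv_eq_mul, mul_comm]
  push_cast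
  ring_nf

-- The integrand of `logLaplaceMarginal` is definitionally the kernel times this prior.
noncomputable def logLaplacePrior (ψ₁ ψ₂ l : ℝ) : ℝ :=
  if l ≤ 1 then (1 / (2 * ψ₁)) * l ^ (-1 + 1 / ψ₁) else (1 / (2 * ψ₂)) * l ^ (-1 - 1 / ψ₂)

section

variable {ψ₁ ψ₂ : ℝ}

lemma logLaplacePrior_nonneg (h₁ : 0 < ψ₁) (h₂ : 0 < ψ₂) {l : ℝ} (hl : 0 ≤ l) :
    0 ≤ logLaplacePrior ψ₁ ψ₂ l := by
  unfold logLaplacePrior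
  split_ifs <;> positivity

lemma logLaplacePrior_le (h₁ : 0 < ψ₁) (h₂ : 0 < ψ₂) {l : ℝ} (hl : 0 < l) :
    logLaplacePrior ψ₁ ψ₂ l ≤ (1 / (2 * ψ₁) + 1 / (2 * ψ₂)) * l ^ (-1 - 1 / ψ₂) := by
  unfold logLaplacePrior
  split_ifs with hl1
  · have hexp : -1 - 1 / ψ₂ ≤ -1 + 1 / ψ₁ := by
      linarith [one_div_pos.2 h₁, one_div_pos.2 h₂]
    calc 1 / (2 * ψ₁) * l ^ (-1 + 1 / ψ₁) ≤ 1 / (2 * ψ₁) * l ^ (-1 - 1 / ψ₂) := by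
          gcongr 1 / (2 * ψ₁) * ?_
          exact rpow_le_rpow_of_exponent_ge hl hl1 hexp
      _ ≤ _ := by gcongr; exact le_add_of_nonneg_right (by positivity)
  · gcongr; exact le_add_of_nonneg_left (by positivity)

lemma logLaplaceMarginal_nonneg (h₁ : 0 < ψ₁) (h₂ : 0 < ψ₂) (β : ℝ) :
    0 ≤ logLaplaceMarginal ψ₁ ψ₂ β :=
  setIntegral_nonneg measurableSet_Ioi fun l hl =>
    mul_nonneg (by positivity) (logLaplacePrior_nonneg h₁ h₂ (le_of_lt hl))

lemma logLaplaceMarginal_le (h₁ : 0 < ψ₁) (h₂ : 0 < ψ₂) {β : ℝ} (hβ : β ≠ 0) :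
    logLaplaceMarginal ψ₁ ψ₂ β ≤
      (1 / (2 * ψ₁) + 1 / (2 * ψ₂)) * (2 ^ ((1 + 1 / ψ₂) / 2) * Gamma ((1 + 1 / ψ₂) / 2) / 2) *
        |β| ^ (-1 - 1 / ψ₂) := by
  set q := 1 + 1 / ψ₂
  have hq : 0 < q := by positivity
  have hb : 0 < β ^ 2 / 2 := by positivity
  set C := 1 / (2 * ψ₁) + 1 / (2 * ψ₂)
  have hkernel : ∀ l ∈ Ioi (0 : ℝ),
      (2 * π * l ^ 2) ^ (-(1 : ℝ) / 2) * exp (-β ^ 2 / (2 * l ^ 2)) * logLaplacePrior ψ₁ ψ₂ l ≤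
        C * (l ^ (-1 - q) * exp (-(β ^ 2 / 2) / l ^ 2)) := by
    intro l (hl : 0 < l)
    calc _ ≤ l⁻¹ * exp (-β ^ 2 / (2 * l ^ 2)) * (C * l ^ (-1 - 1 / ψ₂)) := by
          gcongr
          · exact logLaplacePrior_nonneg h₁ h₂ hl.le
          · exact rpow_two_pi_mul_sq_neg_half_le_inv hl
          · exact logLaplacePrior_le h₁ h₂ hl
      _ = C * (l ^ (-1 - q) * exp (-(β ^ 2 / 2) / l ^ 2)) := by
          rw [show -1 - q = -1 + (-1 - 1 / ψ₂) by ring, rpow_add hl, rpow_neg_one,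
            show -β ^ 2 / (2 * l ^ 2) = -(β ^ 2 / 2) / l ^ 2 by ring]
          ring
  calc logLaplaceMarginal ψ₁ ψ₂ β
      ≤ ∫ l in Ioi 0, C * (l ^ (-1 - q) * exp (-(β ^ 2 / 2) / l ^ 2)) :=
        integral_mono_of_nonneg
          (ae_restrict_of_forall_mem measurableSet_Ioi fun l hl =>
            mul_nonneg (by positivity) (logLaplacePrior_nonneg h₁ h₂ (le_of_lt hl)))
          ((integrableOn_rpow_mul_exp_neg_div_sq hq hb).const_mul C)
          (ae_restrict_of_forall_mem measurableSet_Ioi hkernel)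
    _ = C * (2 ^ (q / 2) * Gamma (q / 2) / 2) * |β| ^ (-1 - 1 / ψ₂) := by
        rw [integral_const_mul, integral_rpow_mul_exp_neg_div_sq hq hb,
          sq_div_two_rpow_neg_div_two, show -q = -1 - 1 / ψ₂ by ring]
        ring

end

/-- Tail behaviour of the log-Laplace marginal: for every ψ₁ > 0, as
|β| → ∞ the marginal is O(|β|^{−1−1/ψ₂}). -/
theorem log_laplace_marginal_tail (ψ₁ ψ₂ : ℝ) (h₁ : 0 < ψ₁) (h₂ : 0 < ψ₂) :
    (fun β => logLaplaceMarginal ψ₁ ψ₂ β) =O[cocompact ℝ]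
      fun β => |β| ^ (-1 - 1 / ψ₂) := by
  refine Asymptotics.IsBigO.of_bound _ (by
    filter_upwards [tendsto_norm_cocompact_atTop.eventually_gt_atTop 0] with β hβ
    rw [Real.norm_of_nonneg (logLaplaceMarginal_nonneg h₁ h₂ β),
      Real.norm_of_nonneg (rpow_nonneg (abs_nonneg β) _)]
    exact logLaplaceMarginal_le h₁ h₂ (norm_pos_iff.1 hβ))
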